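/- arXiv:1907.08389 — 3 statements merged into one kernel-verified Lean document; each statement's English description precedes it below -/
import Mathlib

section
/- For all real p with 0 < p < 1, the complete elliptic integrals satisfy Π(n, m) − ((2+p)(1+2p)/(3(1+p)²))·K(m) = (π/6)·√(1+2p)/(1+p)², where m = √(p³(2+p)/(1+2p)) and n = −p²/(1+2p). -/
/-! With `q = 1 + 2p`, `n = -p²/q` and `m² = p³(2+p)/q`, the integrand of `Π(n, m) - c K(m)` has the
elementary antiderivative
`√q / (3(1+p)²) · arctan (x (q(1+p+p²) - p³x²) / √(q³(1-x²)(1-m²x²)))`.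
This rests on the identity `q³(1-x²)(1-m²x²) + x²(q(1+p+p²) - p³x²)² = (q + p²x²)³ = (q(1 - n x²))³`.
The arctangent vanishes at `x = 0` and tends to `π/2` as `x → 1`, since its argument blows up there. -/

open Real

/-- Complete elliptic integral of the first kind. -/
noncomputable def K (z : ℝ) : ℝ :=
  ∫ x in (0:ℝ)..1, 1 / Real.sqrt ((1 - x ^ 2) * (1 - z ^ 2 * x ^ 2))

/-- Complete elliptic integral of the third kind. -/
noncomputable def Pi3 (n z : ℝ) : ℝ :=
  ∫ x in (0:ℝ)..1, 1 / ((1 - n * x ^ 2) * Real.sqrt ((1 - x ^ 2) * (1 - z ^ 2 * x ^ 2)))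

open Filter Topology Set MeasureTheory intervalIntegral

theorem hasDerivAt_arctan_div_sqrt {u Q : ℝ → ℝ} {u' Q' x : ℝ} (hu : HasDerivAt u u' x)
    (hQ : HasDerivAt Q Q' x) (hQx : 0 < Q x) :
    HasDerivAt (fun y => arctan (u y / √(Q y)))
      ((u' * Q x - u x * Q' / 2) / ((Q x + u x ^ 2) * √(Q x))) x := by
  have hs : 0 < √(Q x) := sqrt_pos.2 hQx
  refine (hu.div (hQ.sqrt hQx.ne') hs.ne').arctan.congr_deriv ?_
  have hsq := sq_sqrt hQx.le
  simp only [Pi.div_apply]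
  field_simp
  rw [hsq]
  ring

theorem tendsto_arctan_div_sqrt_of_tendsto {α : Type*} {l : Filter α} {u Q : α → ℝ} {a : ℝ}
    (ha : 0 < a) (hu : Tendsto u l (𝓝 a)) (hQ : Tendsto Q l (𝓝[>] 0)) :
    Tendsto (fun y => arctan (u y / √(Q y))) l (𝓝 (π / 2)) := by
  obtain ⟨hQ0, hQpos⟩ := tendsto_nhdsWithin_iff.1 hQ
  have hsqrt : Tendsto (fun y => √(Q y)) l (𝓝[>] 0) := by
    refine tendsto_nhdsWithin_iff.2 ⟨by simpa using hQ0.sqrt, ?_⟩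
    filter_upwards [hQpos] with y hy using sqrt_pos.2 hy
  have := hu.pos_mul_atTop ha (tendsto_inv_nhdsGT_zero.comp hsqrt)
  exact (tendsto_arctan_atTop.mono_right nhdsWithin_le_nhds).comp this

theorem one_sub_sq_mul_one_sub_sq_mul_sq_pos {z x : ℝ} (hz : z ^ 2 < 1) (hx : x ^ 2 < 1) :
    0 < (1 - x ^ 2) * (1 - z ^ 2 * x ^ 2) := by
  have : z ^ 2 * x ^ 2 < 1 := mul_lt_one_of_nonneg_of_lt_one_left (sq_nonneg z) hz hx.le
  exact mul_pos (by linarith) (by linarith)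

theorem intervalIntegrable_one_div_mul_sqrt {z : ℝ} (hz : z ^ 2 < 1) {b : ℝ → ℝ}
    (hb : Measurable b) (hb1 : ∀ x, 1 ≤ b x) :
    IntervalIntegrable (fun x => 1 / (b x * √((1 - x ^ 2) * (1 - z ^ 2 * x ^ 2)))) volume 0 1 := by
  have hdom : IntervalIntegrable (fun x : ℝ => (√(1 - z ^ 2))⁻¹ * (1 - x) ^ (-(1 / 2) : ℝ))
      volume 0 1 := by
    have h := (intervalIntegrable_rpow' (a := 0) (b := 1) (r := -(1 / 2)) (by norm_num)).symm
    simpa using (h.comp_sub_left 1).const_mul (√(1 - z ^ 2))⁻¹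
  refine hdom.mono_fun
    (measurable_const.div (hb.mul (by fun_prop))).aestronglyMeasurable ?_
  rw [uIoc_of_le zero_le_one]
  filter_upwards [ae_restrict_mem measurableSet_Ioc] with x ⟨hx0, hx1⟩
  rcases hx1.eq_or_lt with rfl | hx1
  · simp -- at `x = 1` the integrand is `1 / 0 = 0`
  have hQ := one_sub_sq_mul_one_sub_sq_mul_sq_pos hz (by nlinarith : x ^ 2 < 1)
  have hQ_ge : (1 - x) * (1 - z ^ 2) ≤ (1 - x ^ 2) * (1 - z ^ 2 * x ^ 2) := by
    have : z ^ 2 * x ^ 2 ≤ z ^ 2 := mul_le_of_le_one_right (sq_nonneg z) (by nlinarith)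
    gcongr <;> nlinarith
  have h1x : 0 < 1 - x := by linarith
  have h1z : 0 < 1 - z ^ 2 := by linarith
  rw [norm_of_nonneg (by have := hb1 x; positivity), norm_of_nonneg (by positivity),
    rpow_neg h1x.le, ← sqrt_eq_rpow]
  calc 1 / (b x * √((1 - x ^ 2) * (1 - z ^ 2 * x ^ 2)))
      ≤ 1 / √((1 - x) * (1 - z ^ 2)) := by
        gcongr
        calc √((1 - x) * (1 - z ^ 2)) ≤ √((1 - x ^ 2) * (1 - z ^ 2 * x ^ 2)) := by gcongr
          _ ≤ b x * √((1 - x ^ 2) * (1 - z ^ 2 * x ^ 2)) :=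
            le_mul_of_one_le_left (sqrt_nonneg _) (hb1 x)
    _ = (√(1 - z ^ 2))⁻¹ * (√(1 - x))⁻¹ := by
        rw [sqrt_mul h1x.le, one_div, mul_inv, mul_comm]

noncomputable def ellipticPrimitive (p z x : ℝ) : ℝ :=
  √(1 + 2 * p) / (3 * (1 + p) ^ 2) *
    arctan (x * ((1 + 2 * p) * (1 + p + p ^ 2) - p ^ 3 * x ^ 2) /
      √((1 + 2 * p) ^ 3 * ((1 - x ^ 2) * (1 - z ^ 2 * x ^ 2))))

theorem hasDerivAt_ellipticPrimitive {p z x : ℝ} (hp : 0 < p)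
    (hz : z ^ 2 = p ^ 3 * (2 + p) / (1 + 2 * p)) (hQ : 0 < (1 - x ^ 2) * (1 - z ^ 2 * x ^ 2)) :
    HasDerivAt (ellipticPrimitive p z)
      (1 / ((1 - -p ^ 2 / (1 + 2 * p) * x ^ 2) * √((1 - x ^ 2) * (1 - z ^ 2 * x ^ 2)))
        - (2 + p) * (1 + 2 * p) / (3 * (1 + p) ^ 2)
          * (1 / √((1 - x ^ 2) * (1 - z ^ 2 * x ^ 2)))) x := by
  set α := (1 + 2 * p) * (1 + p + p ^ 2)
  have hu : HasDerivAt (fun y => y * (α - p ^ 3 * y ^ 2)) (α - 3 * p ^ 3 * x ^ 2) x :=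
    ((hasDerivAt_id' x).mul (((hasDerivAt_pow 2 x).const_mul (p ^ 3)).const_sub α)).congr_deriv
      (by push_cast; ring)
  have hQ' : HasDerivAt (fun y => (1 + 2 * p) ^ 3 * ((1 - y ^ 2) * (1 - z ^ 2 * y ^ 2)))
      ((1 + 2 * p) ^ 3 * (-2 * x * (1 + z ^ 2 - 2 * z ^ 2 * x ^ 2))) x :=
    ((((hasDerivAt_pow 2 x).const_sub 1).mul (((hasDerivAt_pow 2 x).const_mul (z ^ 2)).const_sub
      1)).const_mul ((1 + 2 * p) ^ 3)).congr_deriv (by push_cast; ring)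
  have h2p : 0 < 1 + 2 * p := by linarith
  have hS : (1 + 2 * p) ^ 3 * ((1 - x ^ 2) * (1 - z ^ 2 * x ^ 2)) + (x * (α - p ^ 3 * x ^ 2)) ^ 2
      = (1 + 2 * p + p ^ 2 * x ^ 2) ^ 3 := by
    rw [hz]; field_simp; ring
  have hN : (α - 3 * p ^ 3 * x ^ 2) * ((1 + 2 * p) ^ 3 * ((1 - x ^ 2) * (1 - z ^ 2 * x ^ 2)))
      - x * (α - p ^ 3 * x ^ 2) * ((1 + 2 * p) ^ 3 * (-2 * x * (1 + z ^ 2 - 2 * z ^ 2 * x ^ 2))) / 2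
      = (1 + 2 * p) ^ 2 * (1 + p + p ^ 2 - p ^ 2 * (2 + p) * x ^ 2)
        * (1 + 2 * p + p ^ 2 * x ^ 2) ^ 2 := by
    rw [hz]; field_simp; ring
  refine ((hasDerivAt_arctan_div_sqrt hu hQ' (by positivity)).const_mul
    (√(1 + 2 * p) / (3 * (1 + p) ^ 2))).congr_deriv ?_
  have hcube : √((1 + 2 * p) ^ 3) = (1 + 2 * p) * √(1 + 2 * p) := by
    rw [pow_succ, sqrt_mul (by positivity), sqrt_sq h2p.le]
  rw [hN, hS, sqrt_mul (by positivity) ((1 - x ^ 2) * (1 - z ^ 2 * x ^ 2)), hcube]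
  have hs0 : 0 < √(1 + 2 * p) := sqrt_pos.2 h2p
  have hr0 : 0 < √((1 - x ^ 2) * (1 - z ^ 2 * x ^ 2)) := sqrt_pos.2 hQ
  have hq0 : 0 < 1 + 2 * p + p ^ 2 * x ^ 2 := by positivity
  have hn : 1 - -p ^ 2 / (1 + 2 * p) * x ^ 2 = (1 + 2 * p + p ^ 2 * x ^ 2) / (1 + 2 * p) := by
    field_simp; ring
  rw [hn]
  generalize √((1 - x ^ 2) * (1 - z ^ 2 * x ^ 2)) = r at hr0 ⊢
  field_simp
  ring

theorem tendsto_ellipticPrimitive_zero {p : ℝ} (hp : 0 < p) (z : ℝ) :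
    Tendsto (ellipticPrimitive p z) (𝓝[>] 0) (𝓝 0) := by
  have hcont : ContinuousAt (ellipticPrimitive p z) 0 := by
    unfold ellipticPrimitive
    fun_prop (disch := simp; positivity)
  simpa [ellipticPrimitive] using hcont.tendsto.mono_left nhdsWithin_le_nhds

theorem tendsto_ellipticPrimitive_one {p z : ℝ} (hp : 0 < p) (hz : z ^ 2 < 1) :
    Tendsto (ellipticPrimitive p z) (𝓝[<] 1) (𝓝 (√(1 + 2 * p) / (3 * (1 + p) ^ 2) * (π / 2))) := by
  have hu : Tendsto (fun y : ℝ => y * ((1 + 2 * p) * (1 + p + p ^ 2) - p ^ 3 * y ^ 2)) (𝓝[<] 1)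
      (𝓝 ((1 + p) ^ 3)) := by
    have h := ((by fun_prop : Continuous fun y : ℝ =>
      y * ((1 + 2 * p) * (1 + p + p ^ 2) - p ^ 3 * y ^ 2)).tendsto 1).mono_left
      (nhdsWithin_le_nhds (s := Iio 1))
    convert h using 2
    ring
  have hQ : Tendsto (fun y : ℝ => (1 + 2 * p) ^ 3 * ((1 - y ^ 2) * (1 - z ^ 2 * y ^ 2))) (𝓝[<] 1)
      (𝓝[>] 0) := by
    refine tendsto_nhdsWithin_iff.2 ⟨?_, ?_⟩
    · have h := ((by fun_prop : Continuous fun y : ℝ =>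
        (1 + 2 * p) ^ 3 * ((1 - y ^ 2) * (1 - z ^ 2 * y ^ 2))).tendsto 1).mono_left
        (nhdsWithin_le_nhds (s := Iio 1))
      simpa using h
    · filter_upwards [Ioo_mem_nhdsLT zero_lt_one] with y ⟨hy0, hy1⟩
      exact mul_pos (by positivity) (one_sub_sq_mul_one_sub_sq_mul_sq_pos hz (by nlinarith))
  exact (tendsto_arctan_div_sqrt_of_tendsto (by positivity) hu hQ).const_mul _

theorem stmt0 (p : ℝ) (hp0 : 0 < p) (hp1 : p < 1) :
    Pi3 (-p ^ 2 / (1 + 2 * p)) (Real.sqrt (p ^ 3 * (2 + p) / (1 + 2 * p)))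
      - (2 + p) * (1 + 2 * p) / (3 * (1 + p) ^ 2)
        * K (Real.sqrt (p ^ 3 * (2 + p) / (1 + 2 * p)))
      = Real.pi / 6 * Real.sqrt (1 + 2 * p) / (1 + p) ^ 2 := by
  set z := √(p ^ 3 * (2 + p) / (1 + 2 * p))
  have hz : z ^ 2 = p ^ 3 * (2 + p) / (1 + 2 * p) := sq_sqrt (by positivity)
  have hz1 : z ^ 2 < 1 := by
    rw [hz, div_lt_one (by positivity)]
    nlinarith [mul_pos (sub_pos.2 hp1) (pow_pos (show (0:ℝ) < 1 + p by linarith) 3)]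
  have hPi := intervalIntegrable_one_div_mul_sqrt hz1 (b := fun x => 1 - -p ^ 2 / (1 + 2 * p) * x ^ 2)
    (by fun_prop) (fun x => by
      have : 0 ≤ p ^ 2 / (1 + 2 * p) * x ^ 2 := by positivity
      rw [neg_div, neg_mul]; linarith)
  have hK := intervalIntegrable_one_div_mul_sqrt hz1 measurable_const (fun _ => le_refl 1)
  simp only [one_mul] at hK
  have hFTC := integral_eq_sub_of_hasDerivAt_of_tendsto zero_lt_one
    (fun x hx => hasDerivAt_ellipticPrimitive hp0 hz
      (one_sub_sq_mul_one_sub_sq_mul_sq_pos hz1 (by nlinarith [hx.1, hx.2])))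
    (hPi.sub (hK.const_mul _)) (tendsto_ellipticPrimitive_zero hp0 z)
    (tendsto_ellipticPrimitive_one hp0 hz1)
  rw [Pi3, K, ← intervalIntegral.integral_const_mul,
    ← intervalIntegral.integral_sub hPi (hK.const_mul _), hFTC]
  field_simp
  ring
end

section
/- For all real a with a > 3, the complete elliptic integrals satisfy Π(n, m) − ((a+3)/(3(a+1)))·K(m) = (π/3)·√((a−1)³(a+3))/((a+1)(a−3)), where m = √(16a/((a−1)³(a+3))) and n = 4a/((a−1)(a+3)). -/
/-! Write `m` for the squared modulus `16a / ((a - 1)³ (a + 3))`, `n` for the characteristic,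
`c = (a + 3) / (3 (a + 1))`, `b = (a + 3) / (2a)`,
`s = √((a - 1)³ (a + 3))`, `C = s / (3 (a + 1)(a - 3))` and `κ = s / ((a - 3)(a + 3))`, the
integrand of `Π(n, m) - c K(m)` has on `(0, 1)` the elementary antiderivative
`-C arctan (κ (b - x²)(1 - m x²) / (x √((1 - x²)(1 - m x²))))`; differentiating it reduces to a
polynomial identity in `x²` and `a`. The argument of `arctan` runs from `+∞` at `0` to `-∞` at
`1`, so the integral is `C π`. -/

open Real

open Filter Topology Set MeasureTheory intervalIntegral

lemma ellipticQuartic_pos {m t : ℝ} (hm : m ≤ 1) (ht : t ∈ Ioo 0 1) :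
    0 < (1 - t ^ 2) * (1 - m * t ^ 2) := by
  obtain ⟨ht0, ht1⟩ := ht
  have ht2 : t ^ 2 < 1 := by nlinarith
  apply mul_pos <;> nlinarith

lemma ellipticPi_integrand_le {n m x : ℝ} (hn0 : 0 ≤ n) (hn1 : n < 1) (hm0 : 0 ≤ m) (hm1 : m < 1)
    (hx : x ∈ Ioo 0 1) :
    1 / ((1 - n * x ^ 2) * √((1 - x ^ 2) * (1 - m * x ^ 2)))
      ≤ ((1 - n) * √(1 - m))⁻¹ * (1 - x) ^ (-(1 / 2) : ℝ) := by
  have hx2 : x ^ 2 ≤ 1 := pow_le_one₀ hx.1.le hx.2.le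
  have hx1 : 0 < 1 - x := by linarith [hx.2]
  have hn : 1 - n ≤ 1 - n * x ^ 2 := by nlinarith [mul_le_mul_of_nonneg_left hx2 hn0]
  have hquartic : (1 - m) * (1 - x) ≤ (1 - x ^ 2) * (1 - m * x ^ 2) := by
    rw [mul_comm]
    exact mul_le_mul (by nlinarith [hx.1]) (by nlinarith) (by linarith) (by nlinarith)
  have hsqrt : √(1 - m) * √(1 - x) ≤ √((1 - x ^ 2) * (1 - m * x ^ 2)) := by
    rw [← sqrt_mul (by linarith)]
    exact sqrt_le_sqrt hquartic
  have : 0 < √(1 - m) := sqrt_pos.mpr (by linarith)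
  have : 0 < √(1 - x) := sqrt_pos.mpr hx1
  rw [rpow_neg hx1.le, ← sqrt_eq_rpow, ← mul_inv, ← one_div, mul_assoc]
  exact one_div_le_one_div_of_le (by positivity) (mul_le_mul hn hsqrt (by positivity) (by linarith))

lemma intervalIntegrable_ellipticPi_integrand {n m : ℝ} (hn0 : 0 ≤ n) (hn1 : n < 1)
    (hm0 : 0 ≤ m) (hm1 : m < 1) :
    IntervalIntegrable (fun x => 1 / ((1 - n * x ^ 2) * √((1 - x ^ 2) * (1 - m * x ^ 2))))
      volume 0 1 := by
  rw [intervalIntegrable_iff_integrableOn_Ioo_of_le zero_le_one]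
  have hbound : IntegrableOn (fun x : ℝ => ((1 - n) * √(1 - m))⁻¹ * (1 - x) ^ (-(1 / 2) : ℝ))
      (Ioo 0 1) := by
    have h := (intervalIntegrable_rpow' (a := 0) (b := 1) (r := -(1 / 2))
      (by norm_num)).comp_sub_left 1
    rw [sub_zero, sub_self] at h
    rw [← intervalIntegrable_iff_integrableOn_Ioo_of_le zero_le_one]
    exact h.symm.const_mul _
  refine hbound.mono' (Measurable.aestronglyMeasurable (by fun_prop)) ?_
  filter_upwards [ae_restrict_mem measurableSet_Ioo] with x hx
  have := ellipticQuartic_pos hm1.le hx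
  have : 0 < 1 - n * x ^ 2 := by nlinarith [hx.1, hx.2]
  rw [norm_of_nonneg (by positivity)]
  exact ellipticPi_integrand_le hn0 hn1 hm0 hm1 hx

lemma hasDerivAt_arctan_div_mul_sqrt {N g : ℝ → ℝ} {N' g' x : ℝ} (hN : HasDerivAt N N' x)
    (hg : HasDerivAt g g' x) (hx : x ≠ 0) (hgx : 0 < g x) :
    HasDerivAt (fun t => arctan (N t / (t * √(g t))))
      ((2 * x * g x * N' - N x * (2 * g x + x * g')) / (2 * √(g x) * (x ^ 2 * g x + N x ^ 2)))
      x := by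
  have hs : 0 < √(g x) := sqrt_pos.mpr hgx
  have h : HasDerivAt (fun t => N t / (t * √(g t))) _ x :=
    hN.div ((hasDerivAt_id' x).mul (hg.sqrt hgx.ne')) (by positivity)
  convert h.arctan using 1
  have : 0 < x ^ 2 * g x := by positivity
  field_simp
  rw [sq_sqrt hgx.le]
  ring

lemma tendsto_arctan_div_of_pos {l : Filter ℝ} {N D : ℝ → ℝ} {L : ℝ} (hN : Tendsto N l (𝓝 L))
    (hL : 0 < L) (hD : Tendsto D l (𝓝[>] 0)) :
    Tendsto (fun t => arctan (N t / D t)) l (𝓝 (π / 2)) :=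
  (tendsto_arctan_atTop.comp (hN.pos_mul_atTop hL hD.inv_tendsto_nhdsGT_zero)).mono_right
    nhdsWithin_le_nhds

lemma tendsto_arctan_div_of_neg {l : Filter ℝ} {N D : ℝ → ℝ} {L : ℝ} (hN : Tendsto N l (𝓝 L))
    (hL : L < 0) (hD : Tendsto D l (𝓝[>] 0)) :
    Tendsto (fun t => arctan (N t / D t)) l (𝓝 (-(π / 2))) :=
  (tendsto_arctan_atBot.comp (hN.neg_mul_atTop hL hD.inv_tendsto_nhdsGT_zero)).mono_right
    nhdsWithin_le_nhds

lemma tendsto_mul_sqrt_ellipticQuartic {m t₀ : ℝ} {l : Filter ℝ} (hm : m ≤ 1) (hl : l ≤ 𝓝 t₀)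
    (hlI : Ioo 0 1 ∈ l) (h₀ : t₀ * √((1 - t₀ ^ 2) * (1 - m * t₀ ^ 2)) = 0) :
    Tendsto (fun t => t * √((1 - t ^ 2) * (1 - m * t ^ 2))) l (𝓝[>] 0) := by
  refine tendsto_nhdsWithin_iff.mpr ⟨?_, ?_⟩
  · rw [← h₀]
    exact (Continuous.tendsto (by fun_prop) t₀).mono_left hl
  · filter_upwards [hlI] with t ht
    exact mul_pos ht.1 (sqrt_pos.mpr (ellipticQuartic_pos hm ht))

namespace EllipticPiReduction

noncomputable def modulusSq (a : ℝ) : ℝ := 16 * a / ((a - 1) ^ 3 * (a + 3))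

noncomputable def characteristic (a : ℝ) : ℝ := 4 * a / ((a - 1) * (a + 3))

noncomputable def antiderivative (a t : ℝ) : ℝ :=
  -(√((a - 1) ^ 3 * (a + 3)) / (3 * (a + 1) * (a - 3))) *
    arctan (√((a - 1) ^ 3 * (a + 3)) / ((a - 3) * (a + 3)) *
        (((a + 3) / (2 * a) - t ^ 2) * (1 - modulusSq a * t ^ 2)) /
      (t * √((1 - t ^ 2) * (1 - modulusSq a * t ^ 2))))

variable {a : ℝ}

lemma modulusSq_pos (ha : 3 < a) : 0 < modulusSq a := by
  have : 0 < a - 1 := by linarith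
  unfold modulusSq
  positivity

lemma modulusSq_lt_one (ha : 3 < a) : modulusSq a < 1 := by
  have : 0 < a - 1 := by linarith
  rw [modulusSq, div_lt_one (by positivity)]
  nlinarith [mul_pos (by linarith : (0 : ℝ) < a - 3) (pow_pos (by linarith : (0 : ℝ) < a + 1) 3)]

lemma characteristic_pos (ha : 3 < a) : 0 < characteristic a := by
  have : 0 < a - 1 := by linarith
  unfold characteristic
  positivity

lemma characteristic_lt_one (ha : 3 < a) : characteristic a < 1 := by
  have : 0 < a - 1 := by linarith
  rw [characteristic, div_lt_one (by positivity)]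
  nlinarith

/-- The equation `antiderivative' = Π-integrand - c · K-integrand` at `x`, with denominators
cleared, `t = x²`, and the common factor `2 (1 - m t)` cancelled. -/
lemma antiderivative_identity (ha : 3 < a) (t : ℝ) :
    √((a - 1) ^ 3 * (a + 3)) / (3 * (a + 1) * (a - 3)) *
        (√((a - 1) ^ 3 * (a + 3)) / ((a - 3) * (a + 3))) *
        (2 * t * (1 - t) * (1 - modulusSq a * t + modulusSq a * ((a + 3) / (2 * a) - t))
          + ((a + 3) / (2 * a) - t) * (1 - t) * (1 - modulusSq a * t)
          - t * ((a + 3) / (2 * a) - t) * (1 - modulusSq a * t + modulusSq a * (1 - t)))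
        * (1 - characteristic a * t)
      = (1 - (a + 3) / (3 * (a + 1)) * (1 - characteristic a * t)) *
        (t * (1 - t) + (√((a - 1) ^ 3 * (a + 3)) / ((a - 3) * (a + 3))) ^ 2 *
          ((a + 3) / (2 * a) - t) ^ 2 * (1 - modulusSq a * t)) := by
  have : 0 < a - 1 := by linarith
  have : a - 3 ≠ 0 := by linarith
  have : a + 3 ≠ 0 := by linarith
  have : a + 1 ≠ 0 := by linarith
  have : a ≠ 0 := by linarith
  rw [div_mul_div_comm, ← pow_two, div_pow, sq_sqrt (by positivity), modulusSq, characteristic]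
  field_simp
  ring

lemma hasDerivAt_antiderivative {x : ℝ} (ha : 3 < a) (hx : x ∈ Ioo 0 1) :
    HasDerivAt (antiderivative a)
      (1 / ((1 - characteristic a * x ^ 2) * √((1 - x ^ 2) * (1 - modulusSq a * x ^ 2)))
        - (a + 3) / (3 * (a + 1)) * (1 / √((1 - x ^ 2) * (1 - modulusSq a * x ^ 2)))) x := by
  have key := antiderivative_identity ha (x ^ 2)
  have hmx : 0 < 1 - modulusSq a * x ^ 2 := by
    nlinarith [hx.1, hx.2, modulusSq_pos ha, modulusSq_lt_one ha]
  have hnx : 0 < 1 - characteristic a * x ^ 2 := by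
    nlinarith [hx.1, hx.2, characteristic_pos ha, characteristic_lt_one ha]
  have hgx := ellipticQuartic_pos (modulusSq_lt_one ha).le hx
  set m := modulusSq a
  set b := (a + 3) / (2 * a)
  set κ := √((a - 1) ^ 3 * (a + 3)) / ((a - 3) * (a + 3))
  set C := √((a - 1) ^ 3 * (a + 3)) / (3 * (a + 1) * (a - 3))
  have hx2 : HasDerivAt (fun t : ℝ => t ^ 2) (2 * x) x := by simpa using hasDerivAt_pow 2 x
  have hN : HasDerivAt (fun t => κ * ((b - t ^ 2) * (1 - m * t ^ 2)))
      (κ * (-(2 * x) * (1 - m * x ^ 2) + (b - x ^ 2) * -(m * (2 * x)))) x :=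
    ((hx2.const_sub _).mul ((hx2.const_mul m).const_sub 1)).const_mul _
  have hg : HasDerivAt (fun t => (1 - t ^ 2) * (1 - m * t ^ 2))
      (-(2 * x) * (1 - m * x ^ 2) + (1 - x ^ 2) * -(m * (2 * x))) x :=
    (hx2.const_sub 1).mul ((hx2.const_mul m).const_sub 1)
  refine ((hasDerivAt_arctan_div_mul_sqrt hN hg hx.1.ne' hgx).const_mul (-C)).congr_deriv ?_
  set n := characteristic a
  set c := (a + 3) / (3 * (a + 1))
  set w := √((1 - x ^ 2) * (1 - m * x ^ 2))
  have hw : 0 < w := sqrt_pos.mpr hgx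
  clear_value m n b c κ C w
  have hB : 0 < x ^ 2 * (1 - x ^ 2) + κ ^ 2 * (b - x ^ 2) ^ 2 * (1 - m * x ^ 2) := by
    have := hx.1
    have : 0 < 1 - x ^ 2 := by nlinarith [hx.2]
    positivity
  have hfactor : x ^ 2 * ((1 - x ^ 2) * (1 - m * x ^ 2)) + (κ * ((b - x ^ 2) * (1 - m * x ^ 2))) ^ 2
      = (1 - m * x ^ 2) * (x ^ 2 * (1 - x ^ 2) + κ ^ 2 * (b - x ^ 2) ^ 2 * (1 - m * x ^ 2)) := by
    ring
  have hcombine : 1 / ((1 - n * x ^ 2) * w) - c * (1 / w)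
      = (1 - c * (1 - n * x ^ 2)) / ((1 - n * x ^ 2) * w) := by
    field_simp
  rw [hfactor, hcombine, ← mul_div_assoc, div_eq_div_iff (by positivity) (by positivity)]
  linear_combination (2 * w * (1 - m * x ^ 2)) * key

lemma tendsto_antiderivative_zero (ha : 3 < a) :
    Tendsto (antiderivative a) (𝓝[>] 0)
      (𝓝 (-(√((a - 1) ^ 3 * (a + 3)) / (3 * (a + 1) * (a - 3))) * (π / 2))) := by
  have : 0 < a - 1 := by linarith
  have : 0 < a - 3 := by linarith
  refine (tendsto_arctan_div_of_pos ((Continuous.tendsto ?_ 0).mono_left nhdsWithin_le_nhds) ?_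
    (tendsto_mul_sqrt_ellipticQuartic (modulusSq_lt_one ha).le nhdsWithin_le_nhds
      (Ioo_mem_nhdsGT zero_lt_one) (by simp))).const_mul _
  · fun_prop
  · simp only [ne_eq, OfNat.ofNat_ne_zero, not_false_eq_true, zero_pow, sub_zero, mul_zero, mul_one]
    positivity

lemma tendsto_antiderivative_one (ha : 3 < a) :
    Tendsto (antiderivative a) (𝓝[<] 1)
      (𝓝 (-(√((a - 1) ^ 3 * (a + 3)) / (3 * (a + 1) * (a - 3))) * -(π / 2))) := by
  have : 0 < a - 1 := by linarith
  have : 0 < a - 3 := by linarith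
  refine (tendsto_arctan_div_of_neg ((Continuous.tendsto ?_ 1).mono_left nhdsWithin_le_nhds) ?_
    (tendsto_mul_sqrt_ellipticQuartic (modulusSq_lt_one ha).le nhdsWithin_le_nhds
      (Ioo_mem_nhdsLT zero_lt_one) (by simp))).const_mul _
  · fun_prop
  · have hb : (a + 3) / (2 * a) - 1 < 0 := by
      rw [sub_neg, div_lt_one (by positivity)]
      linarith
    have hm : 0 < 1 - modulusSq a := by linarith [modulusSq_lt_one ha]
    simp only [one_pow, mul_one]
    exact mul_neg_of_pos_of_neg (by positivity) (mul_neg_of_neg_of_pos hb hm)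

end EllipticPiReduction

open EllipticPiReduction in
theorem stmt1 (a : ℝ) (ha : 3 < a) :
    Pi3 (4 * a / ((a - 1) * (a + 3))) (Real.sqrt (16 * a / ((a - 1) ^ 3 * (a + 3))))
      - (a + 3) / (3 * (a + 1)) * K (Real.sqrt (16 * a / ((a - 1) ^ 3 * (a + 3))))
      = Real.pi / 3 * Real.sqrt ((a - 1) ^ 3 * (a + 3)) / ((a + 1) * (a - 3)) := by
  have hPi := intervalIntegrable_ellipticPi_integrand (characteristic_pos ha).le
    (characteristic_lt_one ha) (modulusSq_pos ha).le (modulusSq_lt_one ha)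
  have hK := (intervalIntegrable_ellipticPi_integrand le_rfl zero_lt_one (modulusSq_pos ha).le
    (modulusSq_lt_one ha)).const_mul ((a + 3) / (3 * (a + 1)))
  simp only [zero_mul, sub_zero, one_mul] at hK
  have hFTC := integral_eq_sub_of_hasDerivAt_of_tendsto zero_lt_one
    (fun x hx => hasDerivAt_antiderivative ha hx) (hPi.sub hK)
    (tendsto_antiderivative_zero ha) (tendsto_antiderivative_one ha)
  rw [integral_sub hPi hK, intervalIntegral.integral_const_mul] at hFTC
  change Pi3 (characteristic a) √(modulusSq a) - _ * K √(modulusSq a) = _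
  rw [Pi3, K, sq_sqrt (modulusSq_pos ha).le, hFTC]
  have : a + 1 ≠ 0 := by linarith
  have : a - 3 ≠ 0 := by linarith
  field_simp
  ring
end

section
/- For real z with 0 ≤ z < 1 and real n with n ≤ 0, the imaginary-modulus transformations K(√z) = (1/√(1−z))·K(√(z/(z−1))) and Π(n, √z) = (1/((1−n)√(1−z)))·Π(n/(n−1), √(z/(z−1))) hold, where on the right-hand side the arguments z/(z−1) ∈ (−∞, 0] and n/(n−1) ∈ [0,1) make the integrals real and convergent. -/
/-- Complete elliptic integral of the first kind, as a function of the squared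
modulus `z = k²` (which may be any real number `≤ 1`). -/
noncomputable def K2 (z : ℝ) : ℝ :=
  ∫ x in (0:ℝ)..1, 1 / Real.sqrt ((1 - x ^ 2) * (1 - z * x ^ 2))

/-- Complete elliptic integral of the third kind, as a function of the
characteristic `n` and the squared modulus `z = k²`. -/
noncomputable def Pi2 (n z : ℝ) : ℝ :=
  ∫ x in (0:ℝ)..1, 1 / ((1 - n * x ^ 2) * Real.sqrt ((1 - x ^ 2) * (1 - z * x ^ 2)))

/-!
The substitution `y = √(1 - x²)` maps `(0, 1)` onto itself, turns `1 - y²` into `x²`, and for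
`a ≠ 1` turns `1 - a/(a - 1) · y²` into `(1 - a x²)/(1 - a)`. Applied with `a = n` and `a = z`, it
transforms the integrand of `Π(n/(n-1), z/(z-1))` pointwise into `(1 - n) √(1 - z)` times that of
`Π(n, z)`; the transformation of `K` is the case `n = 0`.
-/

open MeasureTheory Set Real

lemma sqrt_one_sub_sq_mem_Ioo {x : ℝ} (hx : x ∈ Ioo (0 : ℝ) 1) :
    √(1 - x ^ 2) ∈ Ioo (0 : ℝ) 1 :=
  ⟨sqrt_pos.2 (by nlinarith [hx.1, hx.2]), (sqrt_lt' one_pos).2 (by nlinarith [hx.1])⟩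

lemma sqrt_one_sub_sq_sqrt_one_sub_sq {x : ℝ} (hx : x ∈ Ioo (0 : ℝ) 1) :
    √(1 - √(1 - x ^ 2) ^ 2) = x := by
  rw [sq_sqrt (by nlinarith [hx.1, hx.2]), sub_sub_cancel, sqrt_sq hx.1.le]

lemma bijOn_sqrt_one_sub_sq : BijOn (fun x : ℝ => √(1 - x ^ 2)) (Ioo 0 1) (Ioo 0 1) :=
  InvOn.bijOn
    ⟨fun _ hx => sqrt_one_sub_sq_sqrt_one_sub_sq hx, fun _ hx => sqrt_one_sub_sq_sqrt_one_sub_sq hx⟩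
    (fun _ hx => sqrt_one_sub_sq_mem_Ioo hx) (fun _ hx => sqrt_one_sub_sq_mem_Ioo hx)

lemma hasDerivAt_sqrt_one_sub_sq {x : ℝ} (hx : x ^ 2 < 1) :
    HasDerivAt (fun t : ℝ => √(1 - t ^ 2)) (-x / √(1 - x ^ 2)) x := by
  convert ((hasDerivAt_pow 2 x).const_sub 1).sqrt (by linarith) using 1
  field_simp
  ring

lemma setIntegral_Ioo_zero_one_eq_comp_sqrt_one_sub_sq {E : Type*} [NormedAddCommGroup E]
    [NormedSpace ℝ E] (g : ℝ → E) :
    ∫ y in Ioo (0 : ℝ) 1, g y = ∫ x in Ioo (0 : ℝ) 1, (x / √(1 - x ^ 2)) • g √(1 - x ^ 2) := by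
  conv_lhs => rw [← bijOn_sqrt_one_sub_sq.image_eq]
  rw [integral_image_eq_integral_abs_deriv_smul measurableSet_Ioo
    (fun x hx => (hasDerivAt_sqrt_one_sub_sq (by nlinarith [hx.1, hx.2])).hasDerivWithinAt)
    bijOn_sqrt_one_sub_sq.injOn]
  refine setIntegral_congr_fun measurableSet_Ioo fun x hx => ?_
  rw [neg_div, abs_neg, abs_of_pos (div_pos hx.1 (sqrt_one_sub_sq_mem_Ioo hx).1)]

lemma one_sub_div_sub_one_mul_one_sub_sq {a : ℝ} (ha : a ≠ 1) (x : ℝ) :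
    1 - a / (a - 1) * (1 - x ^ 2) = (1 - a * x ^ 2) / (1 - a) := by
  have : 1 - a ≠ 0 := sub_ne_zero.2 ha.symm
  field_simp
  ring

lemma Pi2_integrand_comp_sqrt_one_sub_sq {n z x : ℝ} (hz : z < 1) (hn : n ≠ 1)
    (hx : x ∈ Ioo (0 : ℝ) 1) :
    x / √(1 - x ^ 2) * (1 / ((1 - n / (n - 1) * √(1 - x ^ 2) ^ 2) *
      √((1 - √(1 - x ^ 2) ^ 2) * (1 - z / (z - 1) * √(1 - x ^ 2) ^ 2)))) =
    (1 - n) * √(1 - z) * (1 / ((1 - n * x ^ 2) * √((1 - x ^ 2) * (1 - z * x ^ 2)))) := by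
  obtain ⟨hx0, hx1⟩ := hx
  have hA : 0 < 1 - x ^ 2 := by nlinarith
  have hB : 0 < 1 - z * x ^ 2 := by nlinarith
  have hsA : √(1 - x ^ 2) ≠ 0 := (sqrt_pos.2 hA).ne'
  have hsB : √(1 - z * x ^ 2) ≠ 0 := (sqrt_pos.2 hB).ne'
  have hsz : √(1 - z) ≠ 0 := (sqrt_pos.2 (by linarith)).ne'
  rw [sq_sqrt hA.le, sub_sub_cancel, one_sub_div_sub_one_mul_one_sub_sq hn,
    one_sub_div_sub_one_mul_one_sub_sq hz.ne, sqrt_mul (sq_nonneg x), sqrt_sq hx0.le,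
    sqrt_div hB.le, sqrt_mul hA.le]
  simp only [one_div, mul_inv, inv_div]
  field_simp

theorem Pi2_div_sub_one_div_sub_one {n z : ℝ} (hz : z < 1) (hn : n ≠ 1) :
    Pi2 (n / (n - 1)) (z / (z - 1)) = (1 - n) * √(1 - z) * Pi2 n z := by
  simp only [Pi2, intervalIntegral.integral_of_le zero_le_one, integral_Ioc_eq_integral_Ioo]
  rw [setIntegral_Ioo_zero_one_eq_comp_sqrt_one_sub_sq, ← integral_const_mul]
  exact setIntegral_congr_fun measurableSet_Ioo fun x hx =>
    Pi2_integrand_comp_sqrt_one_sub_sq hz hn hx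

lemma K2_eq_Pi2_zero : K2 = Pi2 0 := by
  ext z
  simp only [K2, Pi2, zero_mul, sub_zero, one_mul]

theorem stmt19_general (z n : ℝ) (hz1 : z < 1) (hn : n ≤ 0) :
    K2 z = 1 / Real.sqrt (1 - z) * K2 (z / (z - 1)) ∧
    Pi2 n z = 1 / ((1 - n) * Real.sqrt (1 - z)) * Pi2 (n / (n - 1)) (z / (z - 1)) := by
  have hsz : √(1 - z) ≠ 0 := (sqrt_pos.2 (by linarith)).ne'
  have hK := Pi2_div_sub_one_div_sub_one hz1 zero_ne_one
  rw [zero_div, sub_zero, one_mul, ← K2_eq_Pi2_zero] at hK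
  constructor
  · rw [hK]
    field_simp
  · rw [Pi2_div_sub_one_div_sub_one hz1 (by linarith)]
    field_simp [show 1 - n ≠ 0 by linarith]

theorem stmt19 (z n : ℝ) (hz0 : 0 ≤ z) (hz1 : z < 1) (hn : n ≤ 0) :
    K2 z = 1 / Real.sqrt (1 - z) * K2 (z / (z - 1)) ∧
    Pi2 n z = 1 / ((1 - n) * Real.sqrt (1 - z)) * Pi2 (n / (n - 1)) (z / (z - 1)) :=
  stmt19_general z n hz1 hn
end
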